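/- For every n ≥ 0 the diagonal map Δⁿ → Δⁿ × Δⁿ is a retract of the diagonal map (Δ¹)ⁿ → (Δ¹)ⁿ × (Δ¹)ⁿ in the arrow category of simplicial sets. -/

import Mathlib

universe u

open CategoryTheory Limits Simplicial SSet

namespace Paper

/-- A morphism `f` is a retract of a morphism `g` in the arrow category. -/
def RetractOfArrow {C : Type*} [Category C] {A B X Y : C} (f : A ⟶ B) (g : X ⟶ Y) : Prop :=
  ∃ (i : A ⟶ X) (r : X ⟶ A) (i' : B ⟶ Y) (r' : Y ⟶ B),
    i ≫ r = 𝟙 A ∧ i' ≫ r' = 𝟙 B ∧ i ≫ g = f ≫ i' ∧ g ≫ r' = r ≫ f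

/-- A class of morphisms is stable under retracts. -/
def StableUnderRetracts {C : Type*} [Category C] (P : MorphismProperty C) : Prop :=
  ∀ ⦃A B X Y : C⦄ (f : A ⟶ B) (g : X ⟶ Y), RetractOfArrow f g → P g → P f

/-- The cocone at stage `j` of a transfinite sequence, whose colimit condition expresses
continuity of the sequence at `j`. -/
@[simps]
def coconeAt {C : Type*} [Category C] {J : Type} [Preorder J] (F : J ⥤ C) (j : J) :
    Cocone (ObjectProperty.ι (fun i : J => i < j) ⋙ F) where
  pt := F.obj j
  ι :=
    { app := fun i => F.map (homOfLE i.2.le)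
      naturality := fun a b f => by
        dsimp
        rw [Category.comp_id, ← F.map_comp]
        exact congrArg F.map (Subsingleton.elim _ _) }

/-- A class of morphisms is stable under transfinite composition. -/
def StableUnderTransfiniteComposition {C : Type*} [Category C] (P : MorphismProperty C) :
    Prop :=
  ∀ (J : Type) (_ : LinearOrder J) (_ : SuccOrder J) (_ : OrderBot J) (_ : WellFoundedLT J)
    (F : J ⥤ C) (c : Cocone F) (_ : IsColimit c),
    (∀ j : J, ¬IsMax j → P (F.map (homOfLE (Order.le_succ j)))) →
    (∀ j : J, Order.IsSuccLimit j → Nonempty (IsColimit (coconeAt F j))) →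
    P (c.ι.app ⊥)

/-- A weakly saturated class of morphisms: closed under pushouts (cobase change),
retracts, and transfinite composition. -/
def WeaklySaturated {C : Type*} [Category C] (P : MorphismProperty C) : Prop :=
  P.IsStableUnderCobaseChange ∧ StableUnderRetracts P ∧ StableUnderTransfiniteComposition P

/-- The weakly saturated class generated by a class of morphisms: the smallest weakly
saturated class containing it. -/
def SaturationOf {C : Type*} [Category C] (S : MorphismProperty C) : MorphismProperty C :=
  fun _ _ f => ∀ (P : MorphismProperty C), WeaklySaturated P → S ≤ P → P f

/-- The generating left horn inclusions `Λ[n, i] ⟶ Δ[n]`, `0 ≤ i < n`. -/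
inductive LeftHorns : (X Y : SSet) → (X ⟶ Y) → Prop where
  | mk (n : ℕ) (i : Fin (n + 1)) (h : (i : ℕ) < n) : LeftHorns _ _ (Λ[n, i].ι)

/-- The generating right horn inclusions `Λ[n, i] ⟶ Δ[n]`, `0 < i ≤ n`. -/
inductive RightHorns : (X Y : SSet) → (X ⟶ Y) → Prop where
  | mk (n : ℕ) (i : Fin (n + 1)) (h : 0 < (i : ℕ)) : RightHorns _ _ (Λ[n, i].ι)

/-- The generating inner horn inclusions `Λ[n, i] ⟶ Δ[n]`, `0 < i < n`. -/
inductive InnerHorns : (X Y : SSet) → (X ⟶ Y) → Prop where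
  | mk (n : ℕ) (i : Fin (n + 1)) (h0 : 0 < (i : ℕ)) (h1 : (i : ℕ) < n) :
      InnerHorns _ _ (Λ[n, i].ι)

/-- Left anodyne maps: the weakly saturated class generated by the horn inclusions
`Λ[n, i] ⟶ Δ[n]` with `0 ≤ i < n`. -/
def LeftAnodyne : MorphismProperty SSet :=
  SaturationOf (fun X Y f => LeftHorns X Y f)

/-- Right anodyne maps: the weakly saturated class generated by the horn inclusions
`Λ[n, i] ⟶ Δ[n]` with `0 < i ≤ n`. -/
def RightAnodyne : MorphismProperty SSet :=
  SaturationOf (fun X Y f => RightHorns X Y f)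

/-- Inner anodyne maps: the weakly saturated class generated by the inner horn inclusions
`Λ[n, i] ⟶ Δ[n]` with `0 < i < n`. -/
def InnerAnodyne : MorphismProperty SSet :=
  SaturationOf (fun X Y f => InnerHorns X Y f)

end Paper
noncomputable section

namespace Paper

open CategoryTheory Limits Simplicial SSet MonoidalCategory CartesianMonoidalCategory

instance homToZeroSubsingleton (x : SimplexCategory) :
    Subsingleton (x ⟶ SimplexCategory.mk 0) :=
  ⟨fun f g => by
    ext i : 3
    apply Subsingleton.elim (α := Fin 1)⟩

instance ptSubsingleton (m : SimplexCategoryᵒᵖ) : Subsingleton (Δ[0].obj m) :=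
  (stdSimplex.objEquiv (n := ⦋0⦌) (m := m)).subsingleton

/-- The unique map to the standard `0`-simplex. -/
def toPt (X : SSet) : X ⟶ Δ[0] where
  app m := ↾fun _ => stdSimplex.const 0 0 m
  naturality _ _ _ := by
    ext
    apply Subsingleton.elim

/-- The vertex `0` of `Δ[1]`, as a map `Δ[0] ⟶ Δ[1]`. -/
def pt0 : Δ[0] ⟶ Δ[1] := SSet.stdSimplex.map (SimplexCategory.const ⦋0⦌ ⦋1⦌ 0)

/-- The vertex `1` of `Δ[1]`, as a map `Δ[0] ⟶ Δ[1]`. -/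
def pt1 : Δ[0] ⟶ Δ[1] := SSet.stdSimplex.map (SimplexCategory.const ⦋0⦌ ⦋1⦌ 1)

/-- An edge `Δ[1] ⟶ B` is degenerate if it factors through a vertex. -/
def DegenerateEdge {B : SSet} (e : Δ[1] ⟶ B) : Prop :=
  ∃ v : Δ[0] ⟶ B, e = toPt Δ[1] ≫ v

/-- The edge `Δ^{0,1}` of `Δ[n]`, as a map `Δ[1] ⟶ Δ[n]` (for `n ≥ 1`). -/
def edge01 (n : ℕ) (hn : 1 ≤ n) : Δ[1] ⟶ Δ[n] :=
  (yonedaEquiv (X := Δ[n]) (n := ⦋1⦌)).symm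
    (stdSimplex.edge n 0 ⟨1, by omega⟩ (by simp [Fin.le_def]))

/-- The edge `Δ^{n-1,n}` of `Δ[n]`, as a map `Δ[1] ⟶ Δ[n]` (for `n ≥ 1`). -/
def edgeLast (n : ℕ) (hn : 1 ≤ n) : Δ[1] ⟶ Δ[n] :=
  (yonedaEquiv (X := Δ[n]) (n := ⦋1⦌)).symm
    (stdSimplex.edge n ⟨n - 1, by omega⟩ (Fin.last n) (by simp [Fin.le_def]))

/-- Inner fibrations: right lifting property against inner horn inclusions. -/
def InnerFibration {X Y : SSet} (p : X ⟶ Y) : Prop :=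
  ∀ (n : ℕ) (i : Fin (n + 1)), 0 < (i : ℕ) → (i : ℕ) < n →
    HasLiftingProperty (Λ[n, i].ι) p

/-- Left fibrations: right lifting property against `Λ[n, i] ⟶ Δ[n]` for `0 ≤ i < n`. -/
def LeftFibration {X Y : SSet} (p : X ⟶ Y) : Prop :=
  ∀ (n : ℕ) (i : Fin (n + 1)), (i : ℕ) < n → HasLiftingProperty (Λ[n, i].ι) p

/-- Kan fibrations: right lifting property against all horn inclusions. -/
def KanFibration {X Y : SSet} (p : X ⟶ Y) : Prop :=
  ∀ (n : ℕ), 1 ≤ n → ∀ (i : Fin (n + 1)), HasLiftingProperty (Λ[n, i].ι) p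

/-- Trivial Kan fibrations: right lifting property against all boundary inclusions. -/
def TrivialKanFibration {X Y : SSet} (p : X ⟶ Y) : Prop :=
  ∀ (n : ℕ), HasLiftingProperty (∂Δ[n].ι) p

/-- Lurie's notion of a bifibration `X → A × B` (HTT, 2.4.7.2). -/
structure IsBifibration {X A B : SSet} (pq : X ⟶ A ⊗ B) : Prop where
  inner : InnerFibration pq
  left : ∀ (n : ℕ) (hn : 1 ≤ n) (u : (Λ[n, 0] : SSet) ⟶ X) (v : Δ[n] ⟶ A ⊗ B),
    u ≫ pq = Λ[n, 0].ι ≫ v →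
    DegenerateEdge (edge01 n hn ≫ v ≫ snd A B) →
    ∃ w : Δ[n] ⟶ X, Λ[n, 0].ι ≫ w = u ∧ w ≫ pq = v
  right : ∀ (n : ℕ) (hn : 1 ≤ n) (u : (Λ[n, Fin.last n] : SSet) ⟶ X) (v : Δ[n] ⟶ A ⊗ B),
    u ≫ pq = Λ[n, Fin.last n].ι ≫ v →
    DegenerateEdge (edgeLast n hn ≫ v ≫ fst A B) →
    ∃ w : Δ[n] ⟶ X, Λ[n, Fin.last n].ι ≫ w = u ∧ w ≫ pq = v

/-- The pushout-product of two maps of simplicial sets. -/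
def pushoutProd {A B X Y : SSet.{u}} (f : A ⟶ B) (g : X ⟶ Y) :
    pushout (f ▷ X) (A ◁ g) ⟶ B ⊗ Y :=
  pushout.desc (B ◁ g) (f ▷ Y) (whisker_exchange f g).symm

/-- The diagonal map `X ⟶ X × X`. -/
def diag (X : SSet) : X ⟶ X ⊗ X := lift (𝟙 X) (𝟙 X)

end Paper

open Paper CategoryTheory SSet MonoidalCategory in
/-- The `n`-fold product of `Δ[1]` with itself. -/
noncomputable def cube : ℕ → SSet
| 0 => Δ[0]
| (n + 1) => Δ[1] ⊗ cube n

/-! `Δ[n + m]` is a retract of `Δ[m] ⊗ Δ[n]`, with section `i ↦ (min i m, i - m)` and retraction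
`(a, b) ↦ a + b`. Iterating with `m = 1` makes `Δ[n]` a retract of the cube, and a retraction
`X ⟶ Y ⟶ X` squares to a retraction of the diagonals. -/

open CategoryTheory Simplicial MonoidalCategory CartesianMonoidalCategory

namespace SSet.stdSimplex

variable (m n : ℕ)

def minMap : Δ[n + m] ⟶ Δ[m] :=
  SSet.stdSimplex.map (SimplexCategory.mkHom
    ⟨fun i : Fin (n + m + 1) => (⟨min i m, by omega⟩ : Fin (m + 1)),
      fun _ _ h => min_le_min_right m h⟩)

def subMap : Δ[n + m] ⟶ Δ[n] :=
  SSet.stdSimplex.map (SimplexCategory.mkHom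
    ⟨fun i : Fin (n + m + 1) => (⟨i - m, by omega⟩ : Fin (n + 1)),
      fun _ _ h => Nat.sub_le_sub_right h m⟩)

def addOrderHom : Fin (m + 1) × Fin (n + 1) →o Fin (n + m + 1) :=
  ⟨fun a => ⟨a.1 + a.2, by omega⟩, fun _ _ h => Nat.add_le_add h.1 h.2⟩

def addMap : Δ[m] ⊗ Δ[n] ⟶ Δ[n + m] where
  app k := ↾fun x =>
    objMk ((addOrderHom m n).comp (prodStdSimplex.objEquiv (n := k.unop.len) x))

lemma lift_minMap_subMap_comp_addMap : lift (minMap m n) (subMap m n) ≫ addMap m n = 𝟙 _ := by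
  ext ⟨k⟩ x
  induction k using SimplexCategory.rec
  ext i : 2
  change min (x i : ℕ) m + (x i - m) = x i
  omega

def retractTensor : Retract Δ[n + m] (Δ[m] ⊗ Δ[n]) where
  i := lift (minMap m n) (subMap m n)
  r := addMap m n
  retract := lift_minMap_subMap_comp_addMap m n

end SSet.stdSimplex

open SSet

def stdSimplexRetractCube : (n : ℕ) → Retract Δ[n] (cube n)
| 0 => Retract.refl _
| n + 1 => (stdSimplex.retractTensor 1 n).trans ((stdSimplexRetractCube n).map (tensorLeft Δ[1]))

lemma Paper.retractOfArrow_diag_of_retract {X Y : SSet} (h : Retract X Y) :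
    RetractOfArrow (diag X) (diag Y) :=
  ⟨h.i, h.r, h.i ⊗ₘ h.i, h.r ⊗ₘ h.r, h.retract, by simp [tensorHom_comp_tensorHom],
    by ext <;> simp [diag], by ext <;> simp [diag]⟩

open Paper CategoryTheory SSet MonoidalCategory in
/-- the diagonal of `Δ[n]` is a retract of the diagonal of `(Δ¹)ⁿ`. -/
theorem diag_simplex_retract_diag_cube (n : ℕ) :
    Paper.RetractOfArrow (Paper.diag Δ[n]) (Paper.diag (cube n)) :=
  retractOfArrow_diag_of_retract (stdSimplexRetractCube n)
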